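/- Let F_1,…,F_n : ℝ^d → ℝ be continuously differentiable and G-Lipschitz, let θ ∈ (0,1], 1 ≤ m ≤ n, λ ≥ 0, ν > 0, and set F̃_i(w) = F_i(w) + (λ/2)‖w‖². For each subset S of size m let π^S(w) be the maximizer of π ↦ ∑_{i∈S} π_i F̃_i(w) − ν D_S(π) over P_{θ,S}, and let F̄_θ^ν(w) = E_{S∼U_m}[max_{π∈P_{θ,S}} ( ∑_{i∈S} π_i F̃_i(w) − ν D_S(π) )]. Then for every w ∈ ℝ^d, E_{S∼U_m}[ ∑_{i∈S} π^S_i(w) ‖∇F̃_i(w)‖² ] ≤ (4 + 8/(θm)) G² + ‖∇F̄_θ^ν(w)‖². -/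

import Mathlib

/-!
For each subset `S`, `x log x` is `1`-strongly convex on `[0, 1]`, so the regularised objective
`π ↦ ∑ π_i F̃_i(w) - ν D_S(π)` is `ν/4`-strongly concave on `P_{θ,S}`. Hence its maximizers depend
continuously on `w`, and Danskin's argument makes the value differentiable with gradient
`∑_i π^S_i(w) ∇F̃_i(w)`. Thus `∇F̄(w)` is the mean of `∇F̃_i(w)` under the law `S ∼ U_m`,
`i ∼ π^S(w)`, and the left-hand side is the second moment of the same law. Since
`∇F̃_i(w) = ∇F_i(w) + λ w` with `‖∇F_i(w)‖ ≤ G`, the variance is at most `G²`.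
-/

open scoped BigOperators

noncomputable section

open Filter Topology Asymptotics Finset

namespace Real

lemma convexOn_mul_log_sub_sq_div_two :
    ConvexOn ℝ (Set.Icc 0 1) (fun x : ℝ => x * log x - x ^ 2 / 2) := by
  refine convexOn_of_hasDerivWithinAt2_nonneg (convex_Icc 0 1)
    (f' := fun x => log x + 1 - x) (f'' := fun x => x⁻¹ - 1)
    (by fun_prop) ?_ ?_ ?_
  all_goals rw [interior_Icc]
  · intro x hx
    exact (((hasDerivAt_mul_log hx.1.ne').sub ((hasDerivAt_pow 2 x).div_const 2)).congr_deriv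
      (by ring)).hasDerivWithinAt
  · intro x hx
    exact (((hasDerivAt_log hx.1.ne').add_const 1).sub (hasDerivAt_id x)).hasDerivWithinAt
  · intro x hx
    simpa using one_le_inv₀ hx.1 |>.2 hx.2.le

lemma sq_sub_div_four_le_mul_log_midpoint {a b : ℝ} (ha : a ∈ Set.Icc (0 : ℝ) 1)
    (hb : b ∈ Set.Icc (0 : ℝ) 1) :
    (a - b) ^ 2 / 4 ≤ a * log a + b * log b - 2 * ((a + b) / 2 * log ((a + b) / 2)) := by
  have h := convexOn_mul_log_sub_sq_div_two.2 ha hb (by norm_num : (0 : ℝ) ≤ 1 / 2)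
    (by norm_num : (0 : ℝ) ≤ 1 / 2) (by norm_num)
  simp only [smul_eq_mul] at h
  rw [show 1 / 2 * a + 1 / 2 * b = (a + b) / 2 by ring] at h
  nlinarith

lemma mul_log_mul_eq {k : ℝ} (hk : k ≠ 0) (x : ℝ) :
    x * log (x * k) = x * log x + x * log k := by
  rcases eq_or_ne x 0 with rfl | hx
  · simp
  · rw [log_mul hx hk]; ring

end Real

/-- Danskin's envelope theorem. Feasibility of `p₀` at `v` and of `p v` at `w` squeezes the value
between two linearisations that differ by `∑ (p v i - p₀ i) (c v i - c w i) = o(v - w)`. -/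
theorem hasFDerivAt_of_isMaxOn_of_tendsto {E ι : Type*} [NormedAddCommGroup E] [NormedSpace ℝ E]
    {s : Finset ι} {R : (ι → ℝ) → ℝ} {K : Set (ι → ℝ)} {c : E → ι → ℝ}
    {c' : ι → E →L[ℝ] ℝ} {w : E} (hc : ∀ i ∈ s, HasFDerivAt (c · i) (c' i) w)
    {p : E → ι → ℝ} (hpK : ∀ v, p v ∈ K)
    (hp : ∀ v, IsMaxOn (fun π => ∑ i ∈ s, π i * c v i - R π) K (p v))
    {p₀ : ι → ℝ} (hp₀K : p₀ ∈ K) (hp₀ : IsMaxOn (fun π => ∑ i ∈ s, π i * c w i - R π) K p₀)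
    (hlim : ∀ i ∈ s, Tendsto (p · i) (𝓝 w) (𝓝 (p₀ i))) :
    HasFDerivAt (fun v => ∑ i ∈ s, p v i * c v i - R (p v)) (∑ i ∈ s, p₀ i • c' i) w := by
  set g := fun v => ∑ i ∈ s, p v i * c v i - R (p v)
  set ℓ := fun v => ∑ i ∈ s, p₀ i * c v i
  have hℓ : HasFDerivAt ℓ (∑ i ∈ s, p₀ i • c' i) w :=
    HasFDerivAt.fun_sum fun i hi => (hc i hi).const_mul (p₀ i)
  have hgw : g w = ∑ i ∈ s, p₀ i * c w i - R p₀ :=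
    le_antisymm (isMaxOn_iff.1 hp₀ _ (hpK w)) (isMaxOn_iff.1 (hp w) _ hp₀K)
  have hlower : ∀ v, 0 ≤ g v - ℓ v - (g w - ℓ w) := fun v => by
    have hp₀v := isMaxOn_iff.1 (hp v) _ hp₀K
    simp only [g, ℓ] at hp₀v hgw ⊢
    linarith
  have hupper : ∀ v, g v - ℓ v - (g w - ℓ w) ≤ ∑ i ∈ s, (p v i - p₀ i) * (c v i - c w i) :=
    fun v => by
    have hpvw := isMaxOn_iff.1 hp₀ _ (hpK v)
    simp only [g, ℓ, sub_mul, mul_sub, sum_sub_distrib] at hpvw hgw ⊢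
    linarith
  have herr : (fun v => ∑ i ∈ s, (p v i - p₀ i) * (c v i - c w i)) =o[𝓝 w] (· - w) := by
    refine isLittleO_norm_right.1 (IsLittleO.fun_sum fun i hi => ?_)
    have h1 : (fun v => p v i - p₀ i) =o[𝓝 w] (fun _ => (1 : ℝ)) :=
      (isLittleO_one_iff ℝ).2 (tendsto_sub_nhds_zero_iff.2 (hlim i hi))
    simpa using h1.mul_isBigO (hc i hi).isBigO_sub.norm_right
  have h0 : HasFDerivAt (fun v => g v - ℓ v) (0 : E →L[ℝ] ℝ) w := by
    refine hasFDerivAt_iff_isLittleO.2 ?_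
    simp only [zero_apply, sub_zero]
    refine (isBigO_of_le _ fun v => ?_).trans_isLittleO herr
    rw [Real.norm_eq_abs, Real.norm_eq_abs, abs_of_nonneg (hlower v)]
    exact (hupper v).trans (le_abs_self _)
  have hsum := hℓ.add h0
  rw [add_zero] at hsum
  exact hsum.congr_of_eventuallyEq (Eventually.of_forall fun v => by simp)

/-- The set `P_{θ,S}` with cap `1/(θm)`; weights are functions on the whole index type, vanishing
off `S`. -/
def cappedSimplex {ι : Type*} (S : Finset ι) (cap : ℝ) : Set (ι → ℝ) :=
  {π | (∀ i, 0 ≤ π i) ∧ (∀ i ∉ S, π i = 0) ∧ ∑ i ∈ S, π i = 1 ∧ ∀ i, π i ≤ cap}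

/-- `π ↦ ∑_{i∈S} π_i c_i − ν D_S(π)`, with `D_S(π) = ∑_{i∈S} π_i log (π_i k)` (the paper has
`k = m = #S`). -/
def entropicObjective {ι : Type*} (S : Finset ι) (ν k : ℝ) (c π : ι → ℝ) : ℝ :=
  ∑ i ∈ S, π i * c i - ν * ∑ i ∈ S, π i * Real.log (π i * k)

section CappedSimplex

variable {ι : Type*} {S : Finset ι} {cap : ℝ} {π : ι → ℝ}

lemma cappedSimplex_nonempty (hS : S.Nonempty) (hcap : (#S : ℝ)⁻¹ ≤ cap) :
    (cappedSimplex S cap).Nonempty := by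
  classical
  have hpos : (0 : ℝ) < (#S : ℝ)⁻¹ := by simpa using hS.card_pos
  refine ⟨fun i => if i ∈ S then (#S : ℝ)⁻¹ else 0, fun i => ?_, fun i hi => if_neg hi, ?_,
    fun i => ?_⟩
  · dsimp only; split_ifs <;> positivity
  · rw [sum_congr rfl fun i hi => if_pos hi, sum_const, nsmul_eq_mul,
      mul_inv_cancel₀ (by simpa using hS.card_pos.ne')]
  · dsimp only; split_ifs <;> linarith

lemma convex_cappedSimplex : Convex ℝ (cappedSimplex S cap) := by
  rintro p ⟨hp0, hpS, hp1, hpc⟩ q ⟨hq0, hqS, hq1, hqc⟩ a b ha hb hab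
  refine ⟨fun i => ?_, fun i hi => ?_, ?_, fun i => ?_⟩ <;>
    simp only [Pi.add_apply, Pi.smul_apply, smul_eq_mul]
  · have := hp0 i; have := hq0 i; positivity
  · simp [hpS i hi, hqS i hi]
  · rw [sum_add_distrib, ← mul_sum, ← mul_sum, hp1, hq1, mul_one, mul_one, hab]
  · calc a * p i + b * q i ≤ a * cap + b * cap := by gcongr <;> simp [hpc, hqc]
      _ = cap := by rw [← add_mul, hab, one_mul]

lemma isClosed_cappedSimplex : IsClosed (cappedSimplex S cap) := by
  simp only [cappedSimplex, Set.ofPred_and, Set.ofPred_forall]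
  refine (isClosed_iInter fun i => isClosed_le continuous_const (continuous_apply i)).inter
    ((isClosed_iInter fun i => isClosed_iInter fun _ =>
      isClosed_eq (continuous_apply i) continuous_const).inter
    ((isClosed_eq (continuous_finsetSum _ fun i _ => continuous_apply i) continuous_const).inter
      (isClosed_iInter fun i => isClosed_le (continuous_apply i) continuous_const)))

lemma isCompact_cappedSimplex [Finite ι] : IsCompact (cappedSimplex S cap) :=
  (isCompact_univ_pi fun _ => isCompact_Icc).of_isClosed_subset isClosed_cappedSimplex
    fun π hπ i _ => show π i ∈ Set.Icc 0 cap from ⟨hπ.1 i, hπ.2.2.2 i⟩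

lemma cappedSimplex_apply_le_one (hπ : π ∈ cappedSimplex S cap) (i : ι) : π i ≤ 1 := by
  by_cases hi : i ∈ S
  · exact hπ.2.2.1 ▸ single_le_sum (fun j _ => hπ.1 j) hi
  · rw [hπ.2.1 i hi]; exact zero_le_one

lemma abs_sum_mul_sub_le (hπ : π ∈ cappedSimplex S cap) (c c' : ι → ℝ) :
    |∑ i ∈ S, π i * (c i - c' i)| ≤ ∑ i ∈ S, |c i - c' i| :=
  (abs_sum_le_sum_abs _ _).trans <| sum_le_sum fun i _ => by
    rw [abs_mul, abs_of_nonneg (hπ.1 i)]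
    exact mul_le_of_le_one_left (abs_nonneg _) (cappedSimplex_apply_le_one hπ i)

end CappedSimplex

section EntropicObjective

variable {ι : Type*} {S : Finset ι} {ν k cap : ℝ}

lemma entropicObjective_sub_entropicObjective (c c' π : ι → ℝ) :
    entropicObjective S ν k c π - entropicObjective S ν k c' π = ∑ i ∈ S, π i * (c i - c' i) := by
  simp only [entropicObjective, mul_sub, sum_sub_distrib]
  ring

lemma continuous_entropicObjective (hk : k ≠ 0) (c : ι → ℝ) :
    Continuous (entropicObjective S ν k c) := by
  unfold entropicObjective
  simp only [Real.mul_log_mul_eq hk]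
  fun_prop

lemma exists_isMaxOn_entropicObjective [Finite ι] (hk : k ≠ 0) (hS : S.Nonempty)
    (hcap : (#S : ℝ)⁻¹ ≤ cap) (c : ι → ℝ) :
    ∃ p ∈ cappedSimplex S cap, IsMaxOn (entropicObjective S ν k c) (cappedSimplex S cap) p :=
  isCompact_cappedSimplex.exists_isMaxOn (cappedSimplex_nonempty hS hcap)
    (continuous_entropicObjective hk c).continuousOn

lemma entropicObjective_add_add_le_midpoint (hν : 0 ≤ ν) (hk : k ≠ 0) {p q : ι → ℝ}
    (hp : p ∈ cappedSimplex S cap) (hq : q ∈ cappedSimplex S cap) (c : ι → ℝ) :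
    entropicObjective S ν k c p + entropicObjective S ν k c q + ν / 4 * ∑ i ∈ S, (p i - q i) ^ 2
      ≤ 2 * entropicObjective S ν k c (fun i => (p i + q i) / 2) := by
  have hentropy : ∀ i ∈ S, (p i - q i) ^ 2 / 4 ≤ p i * Real.log (p i * k)
      + q i * Real.log (q i * k) - 2 * ((p i + q i) / 2 * Real.log ((p i + q i) / 2 * k)) := by
    intro i _
    have := Real.sq_sub_div_four_le_mul_log_midpoint ⟨hp.1 i, cappedSimplex_apply_le_one hp i⟩
      ⟨hq.1 i, cappedSimplex_apply_le_one hq i⟩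
    simp only [Real.mul_log_mul_eq hk]
    linarith
  have hsum := sum_le_sum hentropy
  simp only [← sum_div, sum_add_distrib, sum_sub_distrib, ← mul_sum] at hsum
  have hpayoff : 2 * ∑ i ∈ S, (p i + q i) / 2 * c i = ∑ i ∈ S, p i * c i + ∑ i ∈ S, q i * c i := by
    rw [mul_sum, ← sum_add_distrib]
    exact sum_congr rfl fun i _ => by ring
  simp only [entropicObjective]
  nlinarith [mul_le_mul_of_nonneg_left hsum hν]

lemma mul_sum_sq_sub_le_entropicObjective_sub (hν : 0 ≤ ν) (hk : k ≠ 0) {c p q : ι → ℝ}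
    (hp : p ∈ cappedSimplex S cap)
    (hmax : IsMaxOn (entropicObjective S ν k c) (cappedSimplex S cap) p)
    (hq : q ∈ cappedSimplex S cap) :
    ν / 4 * ∑ i ∈ S, (p i - q i) ^ 2
      ≤ entropicObjective S ν k c p - entropicObjective S ν k c q := by
  have hmid : (fun i => (p i + q i) / 2) ∈ cappedSimplex S cap := by
    convert convex_cappedSimplex hp hq (by norm_num : (0 : ℝ) ≤ 1 / 2)
      (by norm_num : (0 : ℝ) ≤ 1 / 2) (by norm_num) using 1
    ext i
    simp only [Pi.add_apply, Pi.smul_apply, smul_eq_mul]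
    ring
  linarith [entropicObjective_add_add_le_midpoint hν hk hp hq c, isMaxOn_iff.1 hmax _ hmid]

lemma sum_sq_sub_le_of_isMaxOn_entropicObjective (hν : 0 < ν) (hk : k ≠ 0) {c c' p q : ι → ℝ}
    (hp : p ∈ cappedSimplex S cap)
    (hpmax : IsMaxOn (entropicObjective S ν k c) (cappedSimplex S cap) p)
    (hq : q ∈ cappedSimplex S cap)
    (hqmax : IsMaxOn (entropicObjective S ν k c') (cappedSimplex S cap) q) :
    ∑ i ∈ S, (p i - q i) ^ 2 ≤ 8 / ν * ∑ i ∈ S, |c i - c' i| := by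
  have hgap := mul_sum_sq_sub_le_entropicObjective_sub hν.le hk hp hpmax hq
  have hshift_p := abs_le.1 (abs_sum_mul_sub_le hp c c')
  have hshift_q := abs_le.1 (abs_sum_mul_sub_le hq c c')
  rw [← entropicObjective_sub_entropicObjective (ν := ν) (k := k)] at hshift_p hshift_q
  have hqp := isMaxOn_iff.1 hqmax p hp
  rw [div_mul_eq_mul_div, le_div_iff₀ hν]
  linarith

lemma tendsto_apply_of_isMaxOn_entropicObjective {X : Type*} [TopologicalSpace X] (hν : 0 < ν)
    (hk : k ≠ 0) {c : X → ι → ℝ} {w : X}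
    (hc : ∀ i ∈ S, ContinuousAt (c · i) w) {p : X → ι → ℝ}
    (hpK : ∀ v, p v ∈ cappedSimplex S cap)
    (hp : ∀ v, IsMaxOn (entropicObjective S ν k (c v)) (cappedSimplex S cap) (p v))
    {p₀ : ι → ℝ} (hp₀K : p₀ ∈ cappedSimplex S cap)
    (hp₀ : IsMaxOn (entropicObjective S ν k (c w)) (cappedSimplex S cap) p₀) {i : ι} (hi : i ∈ S) :
    Tendsto (p · i) (𝓝 w) (𝓝 (p₀ i)) := by
  have hbound : ∀ v, |p v i - p₀ i| ≤ √(8 / ν * ∑ j ∈ S, |c v j - c w j|) := fun v => by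
    rw [← Real.sqrt_sq_eq_abs]
    exact Real.sqrt_le_sqrt <| (single_le_sum (f := fun j => (p v j - p₀ j) ^ 2)
      (fun j _ => sq_nonneg _) hi).trans
      (sum_sq_sub_le_of_isMaxOn_entropicObjective hν hk (hpK v) (hp v) hp₀K hp₀)
  have hlim : Tendsto (fun v => √(8 / ν * ∑ j ∈ S, |c v j - c w j|)) (𝓝 w) (𝓝 0) := by
    have : Tendsto (fun v => 8 / ν * ∑ j ∈ S, |c v j - c w j|) (𝓝 w)
        (𝓝 (8 / ν * ∑ j ∈ S, |c w j - c w j|)) :=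
      (tendsto_finsetSum _ fun j hj => ((hc j hj).sub continuousAt_const).abs).const_mul _
    simpa using this.sqrt
  rw [← tendsto_sub_nhds_zero_iff, tendsto_zero_iff_abs_tendsto_zero]
  exact squeeze_zero (fun _ => abs_nonneg _) hbound hlim

theorem hasFDerivAt_sSup_image_entropicObjective {E : Type*} [Finite ι] [NormedAddCommGroup E]
    [NormedSpace ℝ E] (hν : 0 < ν) (hk : k ≠ 0) (hS : S.Nonempty)
    (hcap : (#S : ℝ)⁻¹ ≤ cap) {c : E → ι → ℝ} {c' : ι → E →L[ℝ] ℝ} {w : E}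
    (hc : ∀ i ∈ S, HasFDerivAt (c · i) (c' i) w) {p₀ : ι → ℝ} (hp₀K : p₀ ∈ cappedSimplex S cap)
    (hp₀ : IsMaxOn (entropicObjective S ν k (c w)) (cappedSimplex S cap) p₀) :
    HasFDerivAt (fun v => sSup (entropicObjective S ν k (c v) '' cappedSimplex S cap))
      (∑ i ∈ S, p₀ i • c' i) w := by
  choose p hpK hp using fun v => exists_isMaxOn_entropicObjective (ν := ν) hk hS hcap (c v)
  have hvalue : ∀ v, sSup (entropicObjective S ν k (c v) '' cappedSimplex S cap)
      = entropicObjective S ν k (c v) (p v) := fun v =>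
    IsGreatest.csSup_eq ⟨Set.mem_image_of_mem _ (hpK v),
      Set.forall_mem_image.2 (isMaxOn_iff.1 (hp v))⟩
  simp only [hvalue]
  exact hasFDerivAt_of_isMaxOn_of_tendsto (R := fun π => ν * ∑ i ∈ S, π i * Real.log (π i * k))
    hc hpK hp hp₀K hp₀ fun i hi => tendsto_apply_of_isMaxOn_entropicObjective hν hk
      (fun j hj => (hc j hj).continuousAt) hpK hp hp₀K hp₀ hi

lemma image_entropicObjective_cappedSimplex (c : ι → ℝ) :
    entropicObjective S ν k c '' cappedSimplex S cap = {x | ∃ π : ι → ℝ, (∀ i, 0 ≤ π i) ∧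
      (∀ i ∉ S, π i = 0) ∧ (∑ i ∈ S, π i = 1) ∧ (∀ i, π i ≤ cap) ∧
      x = (∑ i ∈ S, π i * c i) - ν * ∑ i ∈ S, π i * Real.log (π i * k)} := by
  ext x
  simp only [cappedSimplex, entropicObjective, Set.mem_image, Set.mem_ofPred_eq, and_assoc,
    eq_comm]

theorem hasGradientAt_sum_sSup_image_entropicObjective_div {E : Type*} [Finite ι]
    [NormedAddCommGroup E] [InnerProductSpace ℝ E] [CompleteSpace E] {𝒮 : Finset (Finset ι)}
    (hν : 0 < ν) (hk : k ≠ 0) (h𝒮 : ∀ S ∈ 𝒮, S.Nonempty ∧ (#S : ℝ)⁻¹ ≤ cap)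
    {c : E → ι → ℝ} {c' : ι → E} {w : E} (hc : ∀ i, HasGradientAt (c · i) (c' i) w)
    {p : Finset ι → ι → ℝ} (hp : ∀ S ∈ 𝒮, p S ∈ cappedSimplex S cap ∧
      IsMaxOn (entropicObjective S ν k (c w)) (cappedSimplex S cap) (p S)) (N : ℝ) :
    HasGradientAt
      (fun v => (∑ S ∈ 𝒮, sSup (entropicObjective S ν k (c v) '' cappedSimplex S cap)) / N)
      (N⁻¹ • ∑ S ∈ 𝒮, ∑ i ∈ S, p S i • c' i) w := by
  rw [hasGradientAt_iff_hasFDerivAt]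
  simp only [div_eq_mul_inv, map_smul, map_sum]
  exact (HasFDerivAt.fun_sum fun S hS => hasFDerivAt_sSup_image_entropicObjective hν hk
    (h𝒮 S hS).1 (h𝒮 S hS).2 (fun i _ => (hc i).hasFDerivAt) (hp S hS).1 (hp S hS).2).mul_const N⁻¹

end EntropicObjective

section Gradient

variable {F : Type*} [NormedAddCommGroup F] [InnerProductSpace ℝ F] [CompleteSpace F]

lemma HasGradientAt.add_mul_norm_sq {f : F → ℝ} {f' x : F} (hf : HasGradientAt f f' x) (a : ℝ) :
    HasGradientAt (fun z => f z + a / 2 * ‖z‖ ^ 2) (f' + a • x) x := by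
  rw [hasGradientAt_iff_hasFDerivAt, map_add, map_smul]
  refine ((hasGradientAt_iff_hasFDerivAt.1 hf).add
    ((hasStrictFDerivAt_norm_sq x).hasFDerivAt.const_mul (a / 2))).congr_fderiv ?_
  ext y
  simp only [add_apply, smul_apply, InnerProductSpace.toDual_apply_apply, innerSL_apply_apply,
    smul_eq_mul, nsmul_eq_mul]
  ring

lemma norm_gradient_le_of_lip {f : F → ℝ} {x : F} {G : ℝ} (hG : 0 ≤ G)
    (hf : ∀ v, |f v - f x| ≤ G * ‖v - x‖) : ‖gradient f x‖ ≤ G := by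
  rw [gradient, LinearIsometryEquiv.norm_map]
  exact norm_fderiv_le_of_lip' ℝ hG (Eventually.of_forall hf)

end Gradient

lemma sum_mul_norm_add_sq_le {ι E : Type*} [NormedAddCommGroup E] [InnerProductSpace ℝ E]
    {t : Finset ι} {q : ι → ℝ} {u : ι → E} {G : ℝ} (hq : ∀ j ∈ t, 0 ≤ q j)
    (hq₁ : ∑ j ∈ t, q j = 1) (hu : ∀ j ∈ t, ‖u j‖ ≤ G) (h : E) :
    ∑ j ∈ t, q j * ‖u j + h‖ ^ 2 ≤ G ^ 2 + ‖∑ j ∈ t, q j • (u j + h)‖ ^ 2 := by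
  set ū := ∑ j ∈ t, q j • u j
  have hmean : ∑ j ∈ t, q j • (u j + h) = ū + h := by
    simp only [smul_add, sum_add_distrib, ← sum_smul, hq₁, one_smul, ū]
  have hexpand : ∑ j ∈ t, q j * ‖u j + h‖ ^ 2
      = ∑ j ∈ t, q j * ‖u j‖ ^ 2 + 2 * inner ℝ ū h + ‖h‖ ^ 2 := by
    simp only [norm_add_sq_real, mul_add, sum_add_distrib, ← sum_mul, hq₁, one_mul, ū, sum_inner,
      real_inner_smul_left, mul_sum]
    ring_nf
  have hspread : ∑ j ∈ t, q j * ‖u j‖ ^ 2 ≤ G ^ 2 :=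
    calc ∑ j ∈ t, q j * ‖u j‖ ^ 2 ≤ ∑ j ∈ t, q j * G ^ 2 :=
          sum_le_sum fun j hj => by gcongr; exacts [hq j hj, hu j hj]
      _ = G ^ 2 := by rw [← sum_mul, hq₁, one_mul]
  rw [hmean, hexpand, norm_add_sq_real]
  nlinarith [sq_nonneg ‖ū‖]

lemma sum_sum_mul_norm_add_sq_div_le {α ι E : Type*} [NormedAddCommGroup E]
    [InnerProductSpace ℝ E] {𝒮 : Finset α} (h𝒮 : 𝒮.Nonempty) {t : α → Finset ι}
    {q : α → ι → ℝ} {u : ι → E} {G : ℝ} (hq : ∀ a ∈ 𝒮, ∀ i ∈ t a, 0 ≤ q a i)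
    (hq₁ : ∀ a ∈ 𝒮, ∑ i ∈ t a, q a i = 1) (hu : ∀ i, ‖u i‖ ≤ G) (h : E) :
    (∑ a ∈ 𝒮, ∑ i ∈ t a, q a i * ‖u i + h‖ ^ 2) / #𝒮
      ≤ G ^ 2 + ‖(#𝒮 : ℝ)⁻¹ • ∑ a ∈ 𝒮, ∑ i ∈ t a, q a i • (u i + h)‖ ^ 2 := by
  have hN : (0 : ℝ) < #𝒮 := by exact_mod_cast h𝒮.card_pos
  have hweights : ∑ x ∈ 𝒮.sigma t, q x.1 x.2 / #𝒮 = 1 := by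
    rw [sum_sigma, sum_congr rfl fun a ha => by rw [← sum_div, hq₁ a ha], sum_const, nsmul_eq_mul,
      mul_one_div_cancel hN.ne']
  have hsigma := sum_mul_norm_add_sq_le (t := 𝒮.sigma t) (q := fun x => q x.1 x.2 / #𝒮)
    (u := fun x => u x.2) (fun x hx => div_nonneg (hq _ (mem_sigma.1 hx).1 _ (mem_sigma.1 hx).2)
      hN.le) hweights (fun x _ => hu x.2) h
  simpa only [sum_sigma, sum_div, smul_sum, smul_smul, mul_div_right_comm _ _ (#𝒮 : ℝ),
    div_eq_inv_mul, mul_sum, mul_assoc] using hsigma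

theorem gradient_dissimilarity_bound_general
    (d n m : ℕ) (hm : 0 < m) (hmn : m ≤ n)
    (θ lam ν G : ℝ) (hθ : θ ∈ Set.Ioc (0:ℝ) 1) (hν : 0 < ν) (hG : 0 ≤ G)
    (F : Fin n → EuclideanSpace ℝ (Fin d) → ℝ)
    (hFc1 : ∀ i, ContDiff ℝ 1 (F i))
    (hFlip : ∀ i v v', |F i v - F i v'| ≤ G * ‖v - v'‖)
    (w : EuclideanSpace ℝ (Fin d))
    (sel : Finset (Fin n) → Fin n → ℝ)
    (hsel : ∀ S : Finset (Fin n), S.card = m →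
      (∀ i, 0 ≤ sel S i) ∧ (∀ i ∉ S, sel S i = 0) ∧ (∑ i ∈ S, sel S i = 1) ∧
      (∀ i, sel S i ≤ 1 / (θ * m)) ∧
      ∀ π : Fin n → ℝ, (∀ i, 0 ≤ π i) → (∀ i ∉ S, π i = 0) → (∑ i ∈ S, π i = 1) →
        (∀ i, π i ≤ 1 / (θ * m)) →
        (∑ i ∈ S, π i * (F i w + lam / 2 * ‖w‖ ^ 2))
            - ν * ∑ i ∈ S, π i * Real.log (π i * m)
          ≤ (∑ i ∈ S, sel S i * (F i w + lam / 2 * ‖w‖ ^ 2))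
            - ν * ∑ i ∈ S, sel S i * Real.log (sel S i * m)) :
    ∀ Fbar : EuclideanSpace ℝ (Fin d) → ℝ,
      Fbar = (fun v =>
        (∑ S ∈ Finset.univ.filter (fun S : Finset (Fin n) => S.card = m),
          sSup {x : ℝ | ∃ π : Fin n → ℝ, (∀ i, 0 ≤ π i) ∧ (∀ i ∉ S, π i = 0) ∧
            (∑ i ∈ S, π i = 1) ∧ (∀ i, π i ≤ 1 / (θ * m)) ∧
            x = (∑ i ∈ S, π i * (F i v + lam / 2 * ‖v‖ ^ 2))
              - ν * ∑ i ∈ S, π i * Real.log (π i * m)}) / (n.choose m : ℝ)) →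
    (∑ S ∈ Finset.univ.filter (fun S : Finset (Fin n) => S.card = m),
        ∑ i ∈ S, sel S i * ‖gradient (fun z => F i z + lam / 2 * ‖z‖ ^ 2) w‖ ^ 2)
        / (n.choose m : ℝ)
      ≤ (4 + 8 / (θ * m)) * G ^ 2 + ‖gradient Fbar w‖ ^ 2 := by
  rintro Fbar rfl
  set 𝒮 := univ.filter fun S : Finset (Fin n) => #S = m
  have hθm : 0 < θ * m := mul_pos hθ.1 (Nat.cast_pos.2 hm)
  have h𝒮 : #𝒮 = n.choose m := by
    rw [show 𝒮 = powersetCard m univ by rw [powersetCard_eq_filter, powerset_univ],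
      card_powersetCard, card_univ, Fintype.card_fin]
  have hcap : ∀ S ∈ 𝒮, S.Nonempty ∧ (#S : ℝ)⁻¹ ≤ 1 / (θ * m) := fun S hS => by
    rw [(mem_filter.1 hS).2, one_div]
    exact ⟨card_pos.1 ((mem_filter.1 hS).2 ▸ hm),
      inv_anti₀ hθm (mul_le_of_le_one_left (Nat.cast_nonneg m) hθ.2)⟩
  have hmax : ∀ S ∈ 𝒮, sel S ∈ cappedSimplex S (1 / (θ * m)) ∧ IsMaxOn
      (entropicObjective S ν m fun i => F i w + lam / 2 * ‖w‖ ^ 2)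
      (cappedSimplex S (1 / (θ * m))) (sel S) := fun S hS => by
    obtain ⟨h0, hS0, h1, hle, hopt⟩ := hsel S (mem_filter.1 hS).2
    exact ⟨⟨h0, hS0, h1, hle⟩, fun π hπ => hopt π hπ.1 hπ.2.1 hπ.2.2.1 hπ.2.2.2⟩
  have hgradF : ∀ i, HasGradientAt (fun z => F i z + lam / 2 * ‖z‖ ^ 2)
      (gradient (F i) w + lam • w) w := fun i =>
    HasGradientAt.add_mul_norm_sq
      ((hFc1 i).differentiable one_ne_zero).differentiableAt.hasGradientAt lam
  simp only [← image_entropicObjective_cappedSimplex, ← h𝒮,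
    (hasGradientAt_sum_sSup_image_entropicObjective_div hν (Nat.cast_ne_zero.2 hm.ne') hcap
      hgradF hmax _).gradient, (hgradF _).gradient]
  calc _ ≤ G ^ 2 + _ := sum_sum_mul_norm_add_sq_div_le (card_pos.1 (h𝒮 ▸ Nat.choose_pos hmn))
        (fun S hS i _ => (hmax S hS).1.1 i) (fun S hS => (hmax S hS).1.2.2.1)
        (fun i => norm_gradient_le_of_lip hG fun v => hFlip i v w) _
    _ ≤ _ := by
        gcongr
        exact le_mul_of_one_le_left (sq_nonneg G)
          (by linarith [div_pos (by norm_num : (0 : ℝ) < 8) hθm])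

/-- Gradient dissimilarity bound: if for each subset `S` of size `m`, `sel S w` is the
maximizer of `π ↦ ∑_{i∈S} π i F̃ i w − ν D_S(π)` over `P_{θ,S}` (with
`F̃_i = F_i + (λ/2)‖·‖²`), then
`E_{S ∼ U_m}[ ∑_{i∈S} sel S w i ‖∇F̃_i(w)‖² ] ≤ (4 + 8/(θm)) G² + ‖∇F̄_θ^ν(w)‖²`,
the expectation being the average over all subsets of size `m`. -/
theorem gradient_dissimilarity_bound
    (d n m : ℕ) (hn : 0 < n) (hm : 0 < m) (hmn : m ≤ n)
    (θ lam ν G : ℝ) (hθ : θ ∈ Set.Ioc (0:ℝ) 1) (hlam : 0 ≤ lam) (hν : 0 < ν) (hG : 0 ≤ G)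
    (F : Fin n → EuclideanSpace ℝ (Fin d) → ℝ)
    (hFc1 : ∀ i, ContDiff ℝ 1 (F i))
    (hFlip : ∀ i v v', |F i v - F i v'| ≤ G * ‖v - v'‖)
    (w : EuclideanSpace ℝ (Fin d))
    (sel : Finset (Fin n) → Fin n → ℝ)
    (hsel : ∀ S : Finset (Fin n), S.card = m →
      (∀ i, 0 ≤ sel S i) ∧ (∀ i ∉ S, sel S i = 0) ∧ (∑ i ∈ S, sel S i = 1) ∧
      (∀ i, sel S i ≤ 1 / (θ * m)) ∧
      ∀ π : Fin n → ℝ, (∀ i, 0 ≤ π i) → (∀ i ∉ S, π i = 0) → (∑ i ∈ S, π i = 1) →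
        (∀ i, π i ≤ 1 / (θ * m)) →
        (∑ i ∈ S, π i * (F i w + lam / 2 * ‖w‖ ^ 2))
            - ν * ∑ i ∈ S, π i * Real.log (π i * m)
          ≤ (∑ i ∈ S, sel S i * (F i w + lam / 2 * ‖w‖ ^ 2))
            - ν * ∑ i ∈ S, sel S i * Real.log (sel S i * m)) :
    ∀ Fbar : EuclideanSpace ℝ (Fin d) → ℝ,
      Fbar = (fun v =>
        (∑ S ∈ Finset.univ.filter (fun S : Finset (Fin n) => S.card = m),
          sSup {x : ℝ | ∃ π : Fin n → ℝ, (∀ i, 0 ≤ π i) ∧ (∀ i ∉ S, π i = 0) ∧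
            (∑ i ∈ S, π i = 1) ∧ (∀ i, π i ≤ 1 / (θ * m)) ∧
            x = (∑ i ∈ S, π i * (F i v + lam / 2 * ‖v‖ ^ 2))
              - ν * ∑ i ∈ S, π i * Real.log (π i * m)}) / (n.choose m : ℝ)) →
    (∑ S ∈ Finset.univ.filter (fun S : Finset (Fin n) => S.card = m),
        ∑ i ∈ S, sel S i * ‖gradient (fun z => F i z + lam / 2 * ‖z‖ ^ 2) w‖ ^ 2)
        / (n.choose m : ℝ)
      ≤ (4 + 8 / (θ * m)) * G ^ 2 + ‖gradient Fbar w‖ ^ 2 :=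
  gradient_dissimilarity_bound_general d n m hm hmn θ lam ν G hθ hν hG F hFc1 hFlip w sel hsel
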